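/- Suppose Ω ⊂ ℙ(ℝ^d) is a properly convex domain, (x_n) is a sequence in Ω with x_n → x ∈ cl(Ω), (y_n) is a sequence in Ω with y_n → y ∈ cl(Ω), and liminf_{n→∞} H_Ω(x_n, y_n) < +∞. Then y ∈ F_Ω(x) and H_{F_Ω(x)}(x,y) ≤ liminf_{n→∞} H_Ω(x_n, y_n). -/

import Mathlib

open scoped LinearAlgebra.Projectivization Pointwise
open Projectivization Matrix

namespace CCProj

abbrev PSp (d : ℕ) := ℙ ℝ (Fin d → ℝ)

noncomputable instance (d : ℕ) : TopologicalSpace (PSp d) :=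
  inferInstanceAs (TopologicalSpace (Quotient (projectivizationSetoid ℝ (Fin d → ℝ))))

variable {d : ℕ}

noncomputable def glEquivHom (d : ℕ) :
    GL (Fin d) ℝ →* ((Fin d → ℝ) ≃ₗ[ℝ] (Fin d → ℝ)) :=
  (Matrix.GeneralLinearGroup.toLin.trans
    (LinearMap.GeneralLinearGroup.generalLinearEquiv ℝ (Fin d → ℝ))).toMonoidHom

noncomputable def projPerm (e : (Fin d → ℝ) ≃ₗ[ℝ] (Fin d → ℝ)) : Equiv.Perm (PSp d) where
  toFun := Projectivization.map e.toLinearMap e.injective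
  invFun := Projectivization.map e.symm.toLinearMap e.symm.injective
  left_inv x := by
    induction x using Projectivization.ind with
    | h v hv => simp [Projectivization.map_mk]
  right_inv x := by
    induction x using Projectivization.ind with
    | h v hv => simp [Projectivization.map_mk]

noncomputable def glToPerm (d : ℕ) : GL (Fin d) ℝ →* Equiv.Perm (PSp d) where
  toFun g := projPerm (glEquivHom d g)
  map_one' := by
    ext x
    induction x using Projectivization.ind with
    | h v hv => simp [projPerm, Projectivization.map_mk]
  map_mul' g h := by
    ext x
    induction x using Projectivization.ind with
    | h v hv => simp [projPerm, Projectivization.map_mk]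

abbrev PGL (d : ℕ) := GL (Fin d) ℝ ⧸ (glToPerm d).ker

noncomputable def pglPerm (d : ℕ) : PGL d →* Equiv.Perm (PSp d) :=
  QuotientGroup.lift _ (glToPerm d) (fun _ hg => hg)

noncomputable instance : MulAction (PGL d) (PSp d) :=
  MulAction.compHom _ (pglPerm d)

/-! ### Convexity in projective space -/

/-- The affine chart associated to a linear functional `f`: a projective point `x` with
`f(x.rep) ≠ 0` is sent to the unique representative `v` of `x` with `f v = 1`. -/
noncomputable def chartMap (f : (Fin d → ℝ) →ₗ[ℝ] ℝ) (x : PSp d) : Fin d → ℝ :=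
  (f x.rep)⁻¹ • x.rep

/-- A set `C ⊆ ℙ(ℝ^d)` is convex if it lies in some affine chart and is convex there. -/
def IsConvexSet (C : Set (PSp d)) : Prop :=
  ∃ f : (Fin d → ℝ) →ₗ[ℝ] ℝ, (∀ x ∈ C, f x.rep ≠ 0) ∧ Convex ℝ (chartMap f '' C)

/-- A set `C ⊆ ℙ(ℝ^d)` is properly convex if it lies in some affine chart and is
convex and bounded there. -/
def IsProperlyConvexSet (C : Set (PSp d)) : Prop :=
  ∃ f : (Fin d → ℝ) →ₗ[ℝ] ℝ, (∀ x ∈ C, f x.rep ≠ 0) ∧ Convex ℝ (chartMap f '' C) ∧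
    Bornology.IsBounded (chartMap f '' C)

/-- A properly convex domain: a non-empty open properly convex subset of `ℙ(ℝ^d)`. -/
def IsProperlyConvexDomain (Ω : Set (PSp d)) : Prop :=
  IsOpen Ω ∧ Ω.Nonempty ∧ IsProperlyConvexSet Ω

/-- The projectivization of a linear subspace `W ⊆ ℝ^d`, as a subset of `ℙ(ℝ^d)`. -/
def Pb (W : Submodule ℝ (Fin d → ℝ)) : Set (PSp d) := {x | x.rep ∈ W}

/-- The linear span of (the lines representing) a subset of `ℙ(ℝ^d)`. -/
def projSpan (C : Set (PSp d)) : Submodule ℝ (Fin d → ℝ) :=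
  Submodule.span ℝ {v | ∃ x ∈ C, v = Projectivization.rep x}

/-- `C` is open in its span, i.e. equal to its relative interior. -/
def OpenInSpan (C : Set (PSp d)) : Prop :=
  ∃ U : Set (PSp d), IsOpen U ∧ C = U ∩ Pb (projSpan C)

/-! ### The Hilbert metric -/

/-- The set of "cross-ratio" values used to define the Hilbert distance on a properly
convex set `C` which is open in its span: for linear functionals `f, g` which do not
vanish on (the cone over) `C`, one takes `f(ξ)g(η)/(f(η)g(ξ))` where `ξ, η` are
representatives of `x, y`.  (This quantity is independent of the choice of
representatives.)  For such a set `C`, the supremum of this set is exactly the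
cross-ratio `[a,x,y,b]` of the classical definition of the Hilbert distance, where
`a, x, y, b` are aligned in this order on the projective line through `x` and `y`,
with `a, b ∈ ∂C`. -/
def crossSet (C : Set (PSp d)) (x y : PSp d) : Set ℝ :=
  {r | ∃ f g : (Fin d → ℝ) →ₗ[ℝ] ℝ, (∀ z ∈ C, f z.rep ≠ 0) ∧ (∀ z ∈ C, g z.rep ≠ 0) ∧
      r = (f x.rep * g y.rep) / (f y.rep * g x.rep)}

/-- The Hilbert distance on a properly convex set `C ⊆ ℙ(ℝ^d)` which is open in its
span: `H_C(x,y) = (1/2) log [a,x,y,b]`. -/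
noncomputable def hilbertDist (C : Set (PSp d)) (x y : PSp d) : ℝ :=
  (1 / 2) * Real.log (sSup (crossSet C x y))

/-- The distance from a point to a set, for the Hilbert metric on `C`. -/
noncomputable def hilbertDistToSet (C : Set (PSp d)) (x : PSp d) (D : Set (PSp d)) : ℝ :=
  sInf {s | ∃ y ∈ D, s = hilbertDist C x y}

/-- The Hausdorff distance between two subsets of `C`, for the Hilbert metric on `C`. -/
noncomputable def hilbertHausDist (C : Set (PSp d)) (A B : Set (PSp d)) : ℝ :=
  max (sSup {r | ∃ a ∈ A, r = hilbertDistToSet C a B})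
      (sSup {r | ∃ b ∈ B, r = hilbertDistToSet C b A})

/-- The minimal translation length `τ_C(g) = inf_{x ∈ C} H_C(x, gx)`. -/
noncomputable def transLength (C : Set (PSp d)) (g : PGL d) : ℝ :=
  sInf ((fun x => hilbertDist C x (g • x)) '' C)

/-- The minimal translation set `Min(g) = {x ∈ Ω : H_Ω(x,gx) = τ_Ω(g)}`. -/
noncomputable def minSet (Ω : Set (PSp d)) (g : PGL d) : Set (PSp d) :=
  {x ∈ Ω | hilbertDist Ω x (g • x) = transLength Ω g}

/-! ### Automorphisms, cocompact actions -/

/-- The automorphism group `Aut(Ω) = {g ∈ PGL(d,ℝ) : gΩ = Ω}`. -/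
noncomputable def aut (Ω : Set (PSp d)) : Subgroup (PGL d) := MulAction.stabilizer (PGL d) Ω

/-- A collection `G` of elements of `PGL(d,ℝ)` acts co-compactly on `X ⊆ ℙ(ℝ^d)` if
there is a compact `K ⊆ X` with `⋃_{g ∈ G} gK = X`. -/
def ActsCocompactlyOn (G : Set (PGL d)) (X : Set (PSp d)) : Prop :=
  ∃ K : Set (PSp d), K ⊆ X ∧ IsCompact K ∧ (⋃ g ∈ G, g • K) = X

/-- A naive convex co-compact triple `(Ω, 𝒞, Λ)`. -/
structure IsNCCTriple (Ω 𝒞 : Set (PSp d)) (Λ : Subgroup (PGL d)) : Prop where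
  dom : IsProperlyConvexDomain Ω
  lambda_le : Λ ≤ aut Ω
  lambda_inf : (Λ : Set (PGL d)).Infinite
  lambda_disc : DiscreteTopology Λ
  C_nonempty : 𝒞.Nonempty
  C_sub : 𝒞 ⊆ Ω
  C_convex : IsConvexSet 𝒞
  C_closed : closure 𝒞 ∩ Ω ⊆ 𝒞   -- `𝒞` is closed in `Ω`
  C_inv : ∀ γ ∈ Λ, γ • 𝒞 = 𝒞
  C_cocompact : ActsCocompactlyOn (Λ : Set (PGL d)) 𝒞

/-! ### Segments, convex hulls and faces -/

/-- The smallest convex subset of `cl(C)` containing `X` (the convex hull of `X`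
relative to `C`). -/
def convHull (C : Set (PSp d)) (X : Set (PSp d)) : Set (PSp d) :=
  ⋂₀ {D | IsConvexSet D ∧ D ⊆ closure C ∧ X ⊆ D}

/-- The closed segment `[x,y]` joining two points of `cl(C)` inside `cl(C)`. -/
def closedSeg (C : Set (PSp d)) (x y : PSp d) : Set (PSp d) := convHull C {x, y}

/-- The open segment `(x,y) = [x,y] \ {x,y}`. -/
def openSeg (C : Set (PSp d)) (x y : PSp d) : Set (PSp d) := closedSeg C x y \ {x, y}

/-- The open segment with endpoints `[u]` and `[v]` (for `u, v` linearly independent):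
the projective points `[a•u + b•v]` with `a, b > 0`. -/
def openSegV (u v : Fin d → ℝ) : Set (PSp d) :=
  {z | ∃ a b : ℝ, 0 < a ∧ 0 < b ∧ ∃ h : a • u + b • v ≠ 0, z = Projectivization.mk ℝ (a • u + b • v) h}

/-- The projective line through `[u]` and `[v]`. -/
def projLine (u v : Fin d → ℝ) : Set (PSp d) :=
  {z | ∃ a b : ℝ, ∃ h : a • u + b • v ≠ 0, z = Projectivization.mk ℝ (a • u + b • v) h}

/-- The open face `F_Ω(x)` of a point `x ∈ cl(Ω)`. -/
def face (Ω : Set (PSp d)) (x : PSp d) : Set (PSp d) :=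
  insert x {y ∈ closure Ω | ∃ u v : Fin d → ℝ,
    openSegV u v ⊆ closure Ω ∧ x ∈ openSegV u v ∧ y ∈ openSegV u v}

/-- `A` is properly embedded in `B` if `A ⊆ B` and the inclusion is a proper map. -/
def ProperlyEmbedded (A B : Set (PSp d)) : Prop :=
  ∃ h : A ⊆ B, IsProperMap (Set.inclusion h)

/-! ### Simplices -/

/-- The standard open `(k-1)`-dimensional simplex
`{[x₁ : ⋯ : x_k : 0 : ⋯ : 0] : x₁ > 0, …, x_k > 0} ⊆ ℙ(ℝ^d)`. -/
def stdSimplex (d k : ℕ) : Set (PSp d) :=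
  {x | ∃ (v : Fin d → ℝ) (h : v ≠ 0), x = Projectivization.mk ℝ v h ∧
    ∀ i : Fin d, (((i : ℕ) < k → 0 < v i) ∧ (k ≤ (i : ℕ) → v i = 0))}

/-- The `i`-th standard basis point `[e_i] ∈ ℙ(ℝ^d)`. -/
noncomputable def basisPt (d : ℕ) (i : Fin d) : PSp d :=
  Projectivization.mk ℝ (Pi.single i 1) (by
    intro h
    have := congrFun h i
    simp at this)

/-- The absolute values of the complex eigenvalues of a real matrix. -/
noncomputable def eigAbs (M : Matrix (Fin d) (Fin d) ℝ) : Set ℝ :=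
  (fun z : ℂ => ‖z‖) '' spectrum ℂ (M.map Complex.ofReal)

/-- The operator norm on `End(ℝ^d)` associated to the standard Euclidean norm. -/
noncomputable def eucOpNorm (M : Matrix (Fin d) (Fin d) ℝ) : ℝ :=
  ‖Matrix.toEuclideanCLM (𝕜 := ℝ) M‖

/-- The image of a subset of `ℙ(ℝ^d)` under (the projectivization of) an endomorphism
`T` of `ℝ^d`. -/
def projImage (T : Matrix (Fin d) (Fin d) ℝ) (A : Set (PSp d)) : Set (PSp d) :=
  {y | ∃ (v : Fin d → ℝ) (hv : v ≠ 0), Projectivization.mk ℝ v hv ∈ A ∧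
    ∃ hTv : T *ᵥ v ≠ 0, y = Projectivization.mk ℝ (T *ᵥ v) hTv}


open Filter Topology

/-!
Work in an affine chart `f₀ = 1` in which `Ω` is a bounded convex set `C`, and let `p, q ∈ cl C`
represent `x ≠ y`. Extend the segment `[p, q]` inside `cl C` as far as possible beyond both ends,
to `u = p + s₀ (p - q)` and `v = q + t₀ (q - p)`. The open segment `(u, v)` lies in `F_Ω(x)` and
contains `y`, so `H_{F_Ω(x)}(x, y) ≤ ½ log [u, p, q, v]`. For `s > s₀`, `t > t₀` the points
`p + s (p - q)` and `q + t (q - p)` are strictly separated from `cl C` by hyperplanes, which for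
large `n` also separate the corresponding extensions of `[x_n, y_n]` from `Ω`; hence
`H_Ω(x_n, y_n) > ½ log [p + s (p - q), p, q, q + t (q - p)]`. Letting `s ↓ s₀`, `t ↓ t₀` gives the
bound, and finiteness of the liminf forces `s₀, t₀ > 0`.
-/

/-- The cross ratio `[u, p, q, v]` of collinear points with `u = p + s • (p - q)` and
`v = q + t • (q - p)`. -/
noncomputable def extCrossRatio (s t : ℝ) : ℝ := (1 + s) / s * ((1 + t) / t)

lemma extCrossRatio_comm (s t : ℝ) : extCrossRatio s t = extCrossRatio t s :=
  mul_comm _ _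

lemma inv_lt_extCrossRatio {s t : ℝ} (hs : 0 < s) (ht : 0 < t) : s⁻¹ < extCrossRatio s t := by
  have h1 : s⁻¹ < (1 + s) / s := by rw [add_div, one_div, div_self hs.ne']; linarith
  have h2 : 1 < (1 + t) / t := by rw [one_lt_div ht]; linarith
  exact h1.trans (lt_mul_of_one_lt_right (by positivity) h2)

lemma mul_nonneg_of_forall_ne_zero {A B : ℝ}
    (h : ∀ a b : ℝ, 0 < a → 0 < b → a * A + b * B ≠ 0) : 0 ≤ A * B := by
  by_contra! hAB
  rcases mul_neg_iff.1 hAB with ⟨hA, hB⟩ | ⟨hA, hB⟩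
  · exact h (-B) A (by linarith) hA (by ring)
  · exact h B (-A) hB (by linarith) (by ring)

lemma div_mem_Icc_of_forall_ne_zero {P Q s t : ℝ} (hs : 0 < s) (ht : 0 < t)
    (h : ∀ a b : ℝ, 0 < a → 0 < b → a * (P + s * (P - Q)) + b * (Q + t * (Q - P)) ≠ 0) :
    0 ≤ P / Q ∧ P / Q ≤ (1 + t) / t := by
  have hAB := mul_nonneg_of_forall_ne_zero h
  have hQ : Q ≠ 0 := fun hQ => h t (1 + s) ht (by linarith) (by rw [hQ]; ring)
  -- `P` and `Q` are positive combinations of the two extended endpoints, whose values have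
  -- the same sign by `hAB`.
  have hPQ : 0 ≤ P * Q := by
    refine (mul_nonneg_iff_of_pos_left (by positivity : (0 : ℝ) < (1 + s + t) ^ 2)).1 ?_
    have e : (1 + s + t) ^ 2 * (P * Q) = t * (1 + t) * (P + s * (P - Q)) ^ 2
        + ((1 + t) * (1 + s) + s * t) * ((P + s * (P - Q)) * (Q + t * (Q - P)))
        + s * (1 + s) * (Q + t * (Q - P)) ^ 2 := by ring
    rw [e]; positivity
  have hBQ : 0 ≤ (Q + t * (Q - P)) * Q := by
    refine (mul_nonneg_iff_of_pos_left (by positivity : (0 : ℝ) < 1 + s + t)).1 ?_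
    have e : (1 + s + t) * ((Q + t * (Q - P)) * Q) =
        t * ((P + s * (P - Q)) * (Q + t * (Q - P))) + (1 + s) * (Q + t * (Q - P)) ^ 2 := by ring
    rw [e]; positivity
  have e1 : P / Q = P * Q / Q ^ 2 := by field_simp
  have e2 : (1 + t) / t - P / Q = (Q + t * (Q - P)) * Q / (t * Q ^ 2) := by field_simp; ring
  constructor
  · rw [e1]; positivity
  · have := div_nonneg hBQ (by positivity : 0 ≤ t * Q ^ 2)
    linarith

lemma crossRatio_le_extCrossRatio {Fp Fq Gp Gq s t : ℝ} (hs : 0 < s) (ht : 0 < t)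
    (hF : ∀ a b : ℝ, 0 < a → 0 < b → a * (Fp + s * (Fp - Fq)) + b * (Fq + t * (Fq - Fp)) ≠ 0)
    (hG : ∀ a b : ℝ, 0 < a → 0 < b → a * (Gp + s * (Gp - Gq)) + b * (Gq + t * (Gq - Gp)) ≠ 0) :
    Fp * Gq / (Fq * Gp) ≤ extCrossRatio s t := by
  have hF' := (div_mem_Icc_of_forall_ne_zero hs ht hF).2
  obtain ⟨hG0, hG'⟩ := div_mem_Icc_of_forall_ne_zero ht hs fun a b ha hb => by
    rw [add_comm]; exact hG b a hb ha
  rw [mul_div_mul_comm, extCrossRatio, mul_comm ((1 + s) / s)]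
  exact mul_le_mul hF' hG' hG0 (by positivity)

lemma one_add_div_lt_div {P Q t : ℝ} (ht : 0 < t) (hQ : 0 < Q) (h : Q + t * (Q - P) < 0) :
    (1 + t) / t < P / Q := by
  rw [div_lt_div_iff₀ ht hQ]; linarith

lemma pos_of_forall_extCrossRatio_le {s₀ t₀ K : ℝ} (ht₀ : 0 ≤ t₀)
    (h : ∀ s t, s₀ < s → t₀ < t → extCrossRatio s t ≤ K) (hs₀ : 0 ≤ s₀) : 0 < s₀ := by
  refine hs₀.lt_of_ne fun hs₀ => ?_
  have hs : 0 < (|K| + 1)⁻¹ := by positivity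
  have := (inv_lt_extCrossRatio hs (by linarith : 0 < t₀ + 1)).trans_le
    (h _ _ (hs₀ ▸ hs) (lt_add_one t₀))
  rw [inv_inv] at this
  linarith [le_abs_self K]

lemma extCrossRatio_le_of_forall_lt {s₀ t₀ K : ℝ} (hs₀ : 0 ≤ s₀) (ht₀ : 0 ≤ t₀)
    (h : ∀ s t, s₀ < s → t₀ < t → extCrossRatio s t ≤ K) :
    0 < s₀ ∧ 0 < t₀ ∧ extCrossRatio s₀ t₀ ≤ K := by
  have hs₀ := pos_of_forall_extCrossRatio_le ht₀ h hs₀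
  have ht₀ := pos_of_forall_extCrossRatio_le hs₀.le
    (fun t s ht hs => extCrossRatio_comm s t ▸ h s t hs ht) ht₀
  have hcont : ContinuousAt (fun ε => extCrossRatio (s₀ + ε) (t₀ + ε)) 0 := by
    unfold extCrossRatio
    fun_prop (disch := simp [hs₀.ne', ht₀.ne'])
  refine ⟨hs₀, ht₀, ?_⟩
  simpa using le_of_tendsto (hcont.tendsto.mono_left (nhdsWithin_le_nhds (s := Set.Ioi 0)))
    (eventually_nhdsWithin_of_forall fun ε (hε : 0 < ε) =>
      h _ _ (lt_add_of_pos_right _ hε) (lt_add_of_pos_right _ hε))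

lemma exists_linearMap_pos_on_neg_at {E : Type*} [AddCommGroup E] [Module ℝ E]
    [TopologicalSpace E] [IsTopologicalAddGroup E] [ContinuousSMul ℝ E] [LocallyConvexSpace ℝ E]
    {D : Set E} (hD : Convex ℝ D) (hDc : IsClosed D) {f₀ : E →ₗ[ℝ] ℝ} (hf₀D : ∀ w ∈ D, f₀ w = 1)
    {w : E} (hw : w ∉ D) (hf₀w : f₀ w = 1) :
    ∃ ℓ : E →ₗ[ℝ] ℝ, (∀ z ∈ D, 0 < ℓ z) ∧ ℓ w < 0 := by
  obtain ⟨φ, c, hφw, hφD⟩ := geometric_hahn_banach_point_closed hD hDc hw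
  refine ⟨φ.toLinearMap - c • f₀, fun z hz => ?_, ?_⟩
  · simpa [hf₀D z hz] using hφD z hz
  · simpa [hf₀w] using hφw

lemma exists_max_extension {E : Type*} [NormedAddCommGroup E] [NormedSpace ℝ E] {D : Set E}
    (hDc : IsClosed D) (hDb : Bornology.IsBounded D) {p q : E} (hp : p ∈ D) (hpq : p ≠ q) :
    ∃ s₀ : ℝ, 0 ≤ s₀ ∧ p + s₀ • (p - q) ∈ D ∧ ∀ s, s₀ < s → p + s • (p - q) ∉ D := by
  set S := {s : ℝ | 0 ≤ s ∧ p + s • (p - q) ∈ D}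
  have hSc : IsClosed S :=
    (isClosed_le continuous_const continuous_id).inter (hDc.preimage (by fun_prop))
  have hSb : BddAbove S := by
    obtain ⟨R, hR⟩ := isBounded_iff_forall_norm_le.1 hDb
    refine ⟨(R + ‖p‖) / ‖p - q‖, fun s ⟨hs, hsD⟩ => ?_⟩
    rw [le_div_iff₀ (norm_pos_iff.2 (sub_ne_zero.2 hpq))]
    calc s * ‖p - q‖ = ‖(p + s • (p - q)) - p‖ := by
          rw [add_sub_cancel_left, norm_smul, Real.norm_of_nonneg hs]
      _ ≤ R + ‖p‖ := (norm_sub_le _ _).trans (by linarith [hR _ hsD])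
  obtain ⟨h0, hmem⟩ := hSc.csSup_mem ⟨0, le_rfl, by simpa using hp⟩ hSb
  exact ⟨sSup S, h0, hmem, fun s hs hsD => (le_csSup hSb ⟨h0.trans hs.le, hsD⟩).not_gt hs⟩

lemma smul_add_smul_ne_zero {E : Type*} [AddCommGroup E] [Module ℝ E] {f₀ : E →ₗ[ℝ] ℝ}
    {u v : E} (hu : f₀ u = 1) (hv : f₀ v = 1) {a b : ℝ} (ha : 0 < a) (hb : 0 < b) :
    a • u + b • v ≠ 0 := fun h => by
  have := congrArg f₀ h
  simp only [map_add, map_smul, hu, hv, smul_eq_mul, mul_one, map_zero] at this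
  linarith

lemma exists_rep_eq_smul (v : Fin d → ℝ) (hv : v ≠ 0) :
    ∃ c : ℝ, c ≠ 0 ∧ (Projectivization.mk ℝ v hv).rep = c • v := by
  obtain ⟨a, ha⟩ := exists_smul_eq_mk_rep ℝ v hv
  exact ⟨a, a.ne_zero, ha.symm⟩

lemma mk_eq_mk_of_eq_smul {v w : Fin d → ℝ} (hv : v ≠ 0) (hw : w ≠ 0) {c : ℝ} (h : v = c • w) :
    Projectivization.mk ℝ v hv = Projectivization.mk ℝ w hw :=
  (mk_eq_mk_iff' ℝ v w hv hw).2 ⟨c, h.symm⟩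

lemma rep_ratio_mk (f g : (Fin d → ℝ) →ₗ[ℝ] ℝ) {v w : Fin d → ℝ} (hv : v ≠ 0) (hw : w ≠ 0) :
    f (Projectivization.mk ℝ v hv).rep * g (Projectivization.mk ℝ w hw).rep /
      (f (Projectivization.mk ℝ w hw).rep * g (Projectivization.mk ℝ v hv).rep)
      = f v * g w / (f w * g v) := by
  obtain ⟨c, hc, hcv⟩ := exists_rep_eq_smul v hv
  obtain ⟨e, he, hew⟩ := exists_rep_eq_smul w hw
  simp only [hcv, hew, map_smul, smul_eq_mul]
  rw [show c * f v * (e * g w) = (c * e) * (f v * g w) by ring,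
    show e * f w * (c * g v) = (c * e) * (f w * g v) by ring,
    mul_div_mul_left _ _ (mul_ne_zero hc he)]

lemma isQuotientMap_mk' :
    Topology.IsQuotientMap (Projectivization.mk' ℝ : {v : Fin d → ℝ // v ≠ 0} → PSp d) :=
  isQuotientMap_quotient_mk'

lemma continuous_mk_comp {X : Type*} [TopologicalSpace X] {w : X → Fin d → ℝ}
    (hw : Continuous w) (h : ∀ t, w t ≠ 0) :
    Continuous (fun t => Projectivization.mk ℝ (w t) (h t)) :=
  isQuotientMap_mk'.continuous.comp (hw.subtype_mk h)

lemma mk_mem_closure {S : Set (PSp d)} {D : Set (Fin d → ℝ)}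
    (hDS : ∀ w (hw : w ≠ 0), w ∈ D → Projectivization.mk ℝ w hw ∈ S)
    {w : Fin d → ℝ} (hw : w ≠ 0) (hwD : w ∈ closure D) :
    Projectivization.mk ℝ w hw ∈ closure S := by
  have hw' : (⟨w, hw⟩ : {v : Fin d → ℝ // v ≠ 0}) ∈ closure (Subtype.val ⁻¹' D) := by
    rw [closure_subtype, Set.image_preimage_eq_inter_range, Subtype.range_coe_subtype,
      Set.inter_comm]
    exact isOpen_ne.inter_closure ⟨hw, hwD⟩
  exact map_mem_closure isQuotientMap_mk'.continuous hw' fun v hv => hDS v.1 v.2 hv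

lemma mk_mem_openSegV {u v w : Fin d → ℝ} (hw : w ≠ 0) {a b c : ℝ} (ha : 0 < a) (hb : 0 < b)
    (hc : c ≠ 0) (h : c • w = a • u + b • v) : Projectivization.mk ℝ w hw ∈ openSegV u v := by
  have hne : a • u + b • v ≠ 0 := by rw [← h]; exact smul_ne_zero hc hw
  exact ⟨a, b, ha, hb, hne, mk_eq_mk_of_eq_smul hw hne (c := c⁻¹) (by rw [← h, inv_smul_smul₀ hc])⟩

lemma openSegV_subset {S : Set (PSp d)} {D : Set (Fin d → ℝ)} (hD : Convex ℝ D)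
    (hDS : ∀ w (hw : w ≠ 0), w ∈ D → Projectivization.mk ℝ w hw ∈ S)
    {u v : Fin d → ℝ} (hu : u ∈ D) (hv : v ∈ D) : openSegV u v ⊆ S := by
  rintro z ⟨a, b, ha, hb, hne, rfl⟩
  have hab : 0 < a + b := by linarith
  set w := (a / (a + b)) • u + (b / (a + b)) • v
  have hw : a • u + b • v = (a + b) • w := by
    simp only [w, smul_add, smul_smul]
    rw [mul_div_cancel₀ _ hab.ne', mul_div_cancel₀ _ hab.ne']
  have hw0 : w ≠ 0 := fun h => hne (by rw [hw, h, smul_zero])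
  rw [mk_eq_mk_of_eq_smul hne hw0 hw]
  exact hDS w hw0 (hD hu hv (by positivity) (by positivity) (by field_simp))

lemma openSegV_subset_face {Ω : Set (PSp d)} {x : PSp d} {u v : Fin d → ℝ}
    (hseg : openSegV u v ⊆ closure Ω) (hx : x ∈ openSegV u v) : openSegV u v ⊆ face Ω x :=
  fun _ hz => Or.inr ⟨hseg hz, u, v, hseg, hx, hz⟩

lemma face_subset_closure {Ω : Set (PSp d)} {x : PSp d} (hx : x ∈ closure Ω) :
    face Ω x ⊆ closure Ω := by
  rintro z (rfl | hz)
  exacts [hx, hz.1]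

section Hilbert

variable {C : Set (PSp d)}

lemma one_mem_crossSet (f₀ : (Fin d → ℝ) →ₗ[ℝ] ℝ) (hf₀ : ∀ z ∈ C, f₀ z.rep ≠ 0) {x y : PSp d}
    (hx : f₀ x.rep ≠ 0) (hy : f₀ y.rep ≠ 0) : (1 : ℝ) ∈ crossSet C x y :=
  ⟨f₀, f₀, hf₀, hf₀, by rw [mul_comm (f₀ y.rep), div_self (mul_ne_zero hx hy)]⟩

lemma hilbertDist_nonneg {x y : PSp d} (h1 : (1 : ℝ) ∈ crossSet C x y)
    (hbdd : BddAbove (crossSet C x y)) : 0 ≤ hilbertDist C x y :=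
  mul_nonneg (by norm_num) (Real.log_nonneg (le_csSup hbdd h1))

lemma hilbertDist_self {x : PSp d} (hx : x ∈ C) : hilbertDist C x x = 0 := by
  have hsub : crossSet C x x ⊆ {1} := by
    rintro _ ⟨f, g, hf, hg, rfl⟩
    rw [mul_comm (f x.rep), div_self (mul_ne_zero (hg x hx) (hf x hx))]
    rfl
  rcases Set.subset_singleton_iff_eq.1 hsub with h | h <;> simp [hilbertDist, h]

lemma hilbertDist_le_of_forall_le {x y : PSp d} (h1 : (1 : ℝ) ∈ crossSet C x y) {M : ℝ}
    (h : ∀ r ∈ crossSet C x y, r ≤ Real.exp (2 * M)) : hilbertDist C x y ≤ M := by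
  have hpos : 0 < sSup (crossSet C x y) := one_pos.trans_le (le_csSup ⟨_, h⟩ h1)
  have hle := (Real.log_le_iff_le_exp hpos).2 (csSup_le ⟨1, h1⟩ h)
  rw [hilbertDist]; linarith

lemma half_log_lt_hilbertDist {x y : PSp d} {R : ℝ} (hR : 0 < R)
    (h : R < sSup (crossSet C x y)) : 1 / 2 * Real.log R < hilbertDist C x y := by
  have := Real.log_lt_log hR h
  rw [hilbertDist]; linarith

lemma crossSet_le_extCrossRatio {p q : Fin d → ℝ} (hp : p ≠ 0) (hq : q ≠ 0)
    {s t : ℝ} (hs : 0 < s) (ht : 0 < t)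
    (hne : ∀ a b : ℝ, 0 < a → 0 < b → a • (p + s • (p - q)) + b • (q + t • (q - p)) ≠ 0)
    (hseg : openSegV (p + s • (p - q)) (q + t • (q - p)) ⊆ C) :
    ∀ r ∈ crossSet C (Projectivization.mk ℝ p hp) (Projectivization.mk ℝ q hq),
      r ≤ extCrossRatio s t := by
  have hseg' : ∀ f : (Fin d → ℝ) →ₗ[ℝ] ℝ, (∀ z ∈ C, f z.rep ≠ 0) → ∀ a b : ℝ, 0 < a → 0 < b →
      a * (f p + s * (f p - f q)) + b * (f q + t * (f q - f p)) ≠ 0 := by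
    intro f hf a b ha hb h0
    obtain ⟨c, -, hrep⟩ := exists_rep_eq_smul _ (hne a b ha hb)
    refine hf _ (hseg ⟨a, b, ha, hb, hne a b ha hb, rfl⟩) ?_
    simp only [hrep, map_smul, map_add, map_sub, smul_eq_mul]
    linear_combination c * h0
  rintro r ⟨f, g, hf, hg, rfl⟩
  rw [rep_ratio_mk]
  exact crossRatio_le_extCrossRatio hs ht (hseg' f hf) (hseg' g hg)

end Hilbert

section Chart

variable (f₀ : (Fin d → ℝ) →ₗ[ℝ] ℝ)

lemma map_chartMap {z : PSp d} (hz : f₀ z.rep ≠ 0) : f₀ (chartMap f₀ z) = 1 := by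
  simp [chartMap, hz]

lemma chartMap_ne_zero {z : PSp d} (hz : f₀ z.rep ≠ 0) : chartMap f₀ z ≠ 0 := fun h => by
  simpa [h] using map_chartMap f₀ hz

lemma mk_chartMap {z : PSp d} (h : chartMap f₀ z ≠ 0) :
    Projectivization.mk ℝ (chartMap f₀ z) h = z := by
  conv_rhs => rw [← mk_rep z]
  exact mk_eq_mk_of_eq_smul _ _ rfl

lemma apply_rep_eq_mul_apply_chartMap (f : (Fin d → ℝ) →ₗ[ℝ] ℝ) {z : PSp d} (hz : f₀ z.rep ≠ 0) :
    f z.rep = f₀ z.rep * f (chartMap f₀ z) := by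
  simp [chartMap, hz]

lemma chartMap_mk {v : Fin d → ℝ} (hv : v ≠ 0) :
    chartMap f₀ (Projectivization.mk ℝ v hv) = (f₀ v)⁻¹ • v := by
  obtain ⟨c, hc, hrep⟩ := exists_rep_eq_smul v hv
  simp [chartMap, hrep, smul_smul, hc]

lemma map_rep_mk_ne_zero_iff {v : Fin d → ℝ} (hv : v ≠ 0) :
    f₀ (Projectivization.mk ℝ v hv).rep ≠ 0 ↔ f₀ v ≠ 0 := by
  obtain ⟨c, hc, hrep⟩ := exists_rep_eq_smul v hv
  simp [hrep, hc]

lemma isOpen_inter_preimage_chartMap {t : Set (Fin d → ℝ)} (ht : IsOpen t) :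
    IsOpen ({z : PSp d | f₀ z.rep ≠ 0} ∩ chartMap f₀ ⁻¹' t) := by
  rw [← isQuotientMap_mk'.isOpen_preimage]
  have hpre : Projectivization.mk' ℝ ⁻¹' ({z : PSp d | f₀ z.rep ≠ 0} ∩ chartMap f₀ ⁻¹' t)
      = Subtype.val ⁻¹' ({v | f₀ v ≠ 0} ∩ (fun v => (f₀ v)⁻¹ • v) ⁻¹' t) := by
    ext ⟨v, hv⟩
    simp [map_rep_mk_ne_zero_iff, chartMap_mk]
  rw [hpre]
  have hcont : ContinuousOn (fun v => (f₀ v)⁻¹ • v) {v | f₀ v ≠ 0} :=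
    (f₀.continuous_of_finiteDimensional.continuousOn.inv₀ fun _ hv => hv).smul continuousOn_id
  exact (hcont.isOpen_inter_preimage
    (isOpen_ne_fun f₀.continuous_of_finiteDimensional continuous_const) ht).preimage
    continuous_subtype_val

lemma continuousAt_chartMap {z : PSp d} (hz : f₀ z.rep ≠ 0) : ContinuousAt (chartMap f₀) z := by
  have hV : IsOpen {z : PSp d | f₀ z.rep ≠ 0} := by
    simpa using isOpen_inter_preimage_chartMap f₀ isOpen_univ
  exact ((continuousOn_open_iff hV).2 fun t ht => isOpen_inter_preimage_chartMap f₀ ht)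
    |>.continuousAt (hV.mem_nhds hz)

lemma isClosed_setOf_norm_rep_le (R : ℝ) :
    IsClosed {z : PSp d | ‖z.rep‖ ≤ R * |f₀ z.rep|} := by
  rw [← isQuotientMap_mk'.isClosed_preimage]
  have hpre : Projectivization.mk' ℝ ⁻¹' {z : PSp d | ‖z.rep‖ ≤ R * |f₀ z.rep|}
      = Subtype.val ⁻¹' {v : Fin d → ℝ | ‖v‖ ≤ R * |f₀ v|} := by
    ext ⟨v, hv⟩
    obtain ⟨c, hc, hrep⟩ := exists_rep_eq_smul v hv
    simp only [Set.mem_preimage, Set.mem_ofPred_eq, mk'_eq_mk, hrep, norm_smul, map_smul,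
      smul_eq_mul, abs_mul, Real.norm_eq_abs]
    rw [mul_left_comm R, mul_le_mul_iff_right₀ (abs_pos.2 hc)]
  rw [hpre]
  exact (isClosed_le continuous_norm
    (continuous_const.mul f₀.continuous_of_finiteDimensional.abs)).preimage continuous_subtype_val

end Chart

section Domain

variable {Ω : Set (PSp d)} {f₀ : (Fin d → ℝ) →ₗ[ℝ] ℝ}

lemma mk_mem_of_mem_chart (w : Fin d → ℝ) (hw : w ≠ 0) (hwΩ : w ∈ chartMap f₀ '' Ω) :
    Projectivization.mk ℝ w hw ∈ Ω := by
  obtain ⟨z, hz, rfl⟩ := hwΩ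
  rwa [mk_chartMap]

lemma map_eq_one_of_mem_closure_chart (hf₀ : ∀ z ∈ Ω, f₀ z.rep ≠ 0) :
    ∀ w ∈ closure (chartMap f₀ '' Ω), f₀ w = 1 := by
  refine fun w hw =>
    closure_minimal ?_ (isClosed_eq f₀.continuous_of_finiteDimensional continuous_const) hw
  rintro _ ⟨z, hz, rfl⟩
  exact map_chartMap f₀ (hf₀ z hz)

lemma map_rep_ne_zero_of_mem_closure (hf₀ : ∀ z ∈ Ω, f₀ z.rep ≠ 0)
    (hbdd : Bornology.IsBounded (chartMap f₀ '' Ω)) {z : PSp d} (hz : z ∈ closure Ω) :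
    f₀ z.rep ≠ 0 := by
  obtain ⟨R, hR⟩ := isBounded_iff_forall_norm_le.1 hbdd
  have hΩR : Ω ⊆ {z : PSp d | ‖z.rep‖ ≤ R * |f₀ z.rep|} := by
    intro z hz
    have hrep : z.rep = f₀ z.rep • chartMap f₀ z := by simp [chartMap, smul_smul, hf₀ z hz]
    show ‖z.rep‖ ≤ R * |f₀ z.rep|
    conv_lhs => rw [hrep]
    rw [norm_smul, Real.norm_eq_abs, mul_comm R]
    exact mul_le_mul_of_nonneg_left (hR _ (Set.mem_image_of_mem _ hz)) (abs_nonneg _)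
  intro h0
  have hzR := (isClosed_setOf_norm_rep_le f₀ R).closure_subset_iff.2 hΩR hz
  simp only [Set.mem_ofPred_eq, h0, abs_zero, mul_zero, norm_le_zero_iff] at hzR
  exact z.rep_nonzero hzR

lemma exists_extension_mem_chart (hop : IsOpen Ω) (hf₀ : ∀ z ∈ Ω, f₀ z.rep ≠ 0)
    {z : PSp d} (hz : z ∈ Ω) {q : Fin d → ℝ} (hq : f₀ q = 1) :
    ∃ s : ℝ, 0 < s ∧ chartMap f₀ z + s • (chartMap f₀ z - q) ∈ chartMap f₀ '' Ω := by
  set p := chartMap f₀ z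
  have hfp : f₀ p = 1 := map_chartMap f₀ (hf₀ z hz)
  have hw1 : ∀ s : ℝ, f₀ (p + s • (p - q)) = 1 := fun s => by simp [hfp, hq]
  have hw0 : ∀ s : ℝ, p + s • (p - q) ≠ 0 := fun s h => by simpa [h] using hw1 s
  have hcont := continuous_mk_comp (by fun_prop) hw0
  have hnhds : ∀ᶠ s in 𝓝 (0 : ℝ), Projectivization.mk ℝ _ (hw0 s) ∈ Ω := by
    refine hcont.continuousAt.preimage_mem_nhds (hop.mem_nhds ?_)
    simpa [p, mk_chartMap] using hz
  obtain ⟨s, hsΩ, hs⟩ :=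
    ((hnhds.filter_mono (nhdsWithin_le_nhds (s := Set.Ioi 0))).and self_mem_nhdsWithin).exists
  exact ⟨s, hs, _, hsΩ, by simp [chartMap_mk, hw1]⟩

lemma crossSet_bddAbove (hop : IsOpen Ω) (hf₀ : ∀ z ∈ Ω, f₀ z.rep ≠ 0)
    (hconv : Convex ℝ (chartMap f₀ '' Ω)) {x y : PSp d} (hx : x ∈ Ω) (hy : y ∈ Ω) :
    BddAbove (crossSet Ω x y) := by
  have hx0 := chartMap_ne_zero f₀ (hf₀ x hx)
  have hy0 := chartMap_ne_zero f₀ (hf₀ y hy)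
  have hfx := map_chartMap f₀ (hf₀ x hx)
  have hfy := map_chartMap f₀ (hf₀ y hy)
  obtain ⟨s, hs, hu⟩ := exists_extension_mem_chart hop hf₀ hx hfy
  obtain ⟨t, ht, hv⟩ := exists_extension_mem_chart hop hf₀ hy hfx
  refine ⟨extCrossRatio s t, ?_⟩
  rw [← mk_chartMap f₀ hx0, ← mk_chartMap f₀ hy0]
  exact crossSet_le_extCrossRatio hx0 hy0 hs ht
    (fun a b ha hb => smul_add_smul_ne_zero (f₀ := f₀) (by simp [hfx, hfy])
      (by simp [hfx, hfy]) ha hb)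
    (openSegV_subset hconv mk_mem_of_mem_chart hu hv)

lemma apply_rep_ne_zero_of_pos_on_chart (hf₀ : ∀ z ∈ Ω, f₀ z.rep ≠ 0)
    {ℓ : (Fin d → ℝ) →ₗ[ℝ] ℝ} (hℓ : ∀ w ∈ chartMap f₀ '' Ω, 0 < ℓ w) (z : PSp d) (hz : z ∈ Ω) :
    ℓ z.rep ≠ 0 := by
  rw [apply_rep_eq_mul_apply_chartMap f₀ ℓ (hf₀ z hz)]
  exact mul_ne_zero (hf₀ z hz) (hℓ _ (Set.mem_image_of_mem _ hz)).ne'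

lemma eventually_half_log_extCrossRatio_lt_hilbertDist (hop : IsOpen Ω)
    (hf₀ : ∀ z ∈ Ω, f₀ z.rep ≠ 0) (hconv : Convex ℝ (chartMap f₀ '' Ω))
    {xs ys : ℕ → PSp d} (hxs : ∀ n, xs n ∈ Ω) (hys : ∀ n, ys n ∈ Ω) {p q : Fin d → ℝ}
    (hp : Tendsto (fun n => chartMap f₀ (xs n)) atTop (𝓝 p))
    (hq : Tendsto (fun n => chartMap f₀ (ys n)) atTop (𝓝 q)) {s t : ℝ} (hs : 0 < s) (ht : 0 < t)
    (hu : p + s • (p - q) ∉ closure (chartMap f₀ '' Ω))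
    (hv : q + t • (q - p) ∉ closure (chartMap f₀ '' Ω)) :
    ∀ᶠ n in atTop, 1 / 2 * Real.log (extCrossRatio s t) < hilbertDist Ω (xs n) (ys n) := by
  have hD1 := map_eq_one_of_mem_closure_chart hf₀
  have hfp : f₀ p = 1 := hD1 p (mem_closure_of_tendsto hp
    (Eventually.of_forall fun n => Set.mem_image_of_mem _ (hxs n)))
  have hfq : f₀ q = 1 := hD1 q (mem_closure_of_tendsto hq
    (Eventually.of_forall fun n => Set.mem_image_of_mem _ (hys n)))
  obtain ⟨ℓ, hℓD, hℓv⟩ := exists_linearMap_pos_on_neg_at hconv.closure isClosed_closure hD1 hv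
    (by simp [hfp, hfq])
  obtain ⟨m, hmD, hmu⟩ := exists_linearMap_pos_on_neg_at hconv.closure isClosed_closure hD1 hu
    (by simp [hfp, hfq])
  have hℓΩ := apply_rep_ne_zero_of_pos_on_chart hf₀ fun w hw => hℓD w (subset_closure hw)
  have hmΩ := apply_rep_ne_zero_of_pos_on_chart hf₀ fun w hw => hmD w (subset_closure hw)
  have hℓn := ((ℓ.continuous_of_finiteDimensional.tendsto _).comp
    (hq.add ((hq.sub hp).const_smul t))).eventually_lt_const hℓv
  have hmn := ((m.continuous_of_finiteDimensional.tendsto _).comp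
    (hp.add ((hp.sub hq).const_smul s))).eventually_lt_const hmu
  filter_upwards [hℓn, hmn] with n hℓn hmn
  simp only [Function.comp_apply, map_add, map_smul, map_sub, smul_eq_mul] at hℓn hmn
  set pn := chartMap f₀ (xs n)
  set qn := chartMap f₀ (ys n)
  have hpn : pn ∈ closure (chartMap f₀ '' Ω) := subset_closure (Set.mem_image_of_mem _ (hxs n))
  have hqn : qn ∈ closure (chartMap f₀ '' Ω) := subset_closure (Set.mem_image_of_mem _ (hys n))
  have hratio := rep_ratio_mk ℓ m (chartMap_ne_zero f₀ (hf₀ _ (hxs n)))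
    (chartMap_ne_zero f₀ (hf₀ _ (hys n)))
  rw [mk_chartMap, mk_chartMap] at hratio
  have hlt : extCrossRatio s t < ℓ (xs n).rep * m (ys n).rep / (ℓ (ys n).rep * m (xs n).rep) := by
    rw [hratio, mul_div_mul_comm, extCrossRatio, mul_comm ((1 + s) / s)]
    exact mul_lt_mul'' (one_add_div_lt_div ht (hℓD qn hqn) hℓn)
      (one_add_div_lt_div hs (hmD pn hpn) hmn) (by positivity) (by positivity)
  exact half_log_lt_hilbertDist (by unfold extCrossRatio; positivity)
    (hlt.trans_le (le_csSup (crossSet_bddAbove hop hf₀ hconv (hxs n) (hys n))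
      ⟨ℓ, m, hℓΩ, hmΩ, rfl⟩))

lemma mem_face_and_crossSet_face_le {D : Set (Fin d → ℝ)} (hD : Convex ℝ D)
    (hDΩ : ∀ w (hw : w ≠ 0), w ∈ D → Projectivization.mk ℝ w hw ∈ closure Ω)
    {p q : Fin d → ℝ} (hp : p ≠ 0) (hq : q ≠ 0) (hfp : f₀ p = 1) (hfq : f₀ q = 1)
    {s t : ℝ} (hs : 0 < s) (ht : 0 < t) (hu : p + s • (p - q) ∈ D) (hv : q + t • (q - p) ∈ D) :
    Projectivization.mk ℝ q hq ∈ face Ω (Projectivization.mk ℝ p hp) ∧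
      ∀ r ∈ crossSet (face Ω (Projectivization.mk ℝ p hp)) (Projectivization.mk ℝ p hp)
        (Projectivization.mk ℝ q hq), r ≤ extCrossRatio s t := by
  have hpseg := mk_mem_openSegV hp (by positivity : (0 : ℝ) < 1 + t) hs
    (by positivity : (1 + s + t : ℝ) ≠ 0) (u := p + s • (p - q)) (v := q + t • (q - p))
    (by module)
  have hqseg := mk_mem_openSegV hq ht (by positivity : (0 : ℝ) < 1 + s)
    (by positivity : (1 + s + t : ℝ) ≠ 0) (u := p + s • (p - q)) (v := q + t • (q - p))
    (by module)
  have hseg := openSegV_subset_face (openSegV_subset hD hDΩ hu hv) hpseg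
  refine ⟨hseg hqseg, crossSet_le_extCrossRatio hp hq hs ht (fun a b ha hb => ?_) hseg⟩
  exact smul_add_smul_ne_zero (f₀ := f₀) (by simp [hfp, hfq]) (by simp [hfp, hfq]) ha hb

theorem mem_face_and_hilbertDist_face_le (hop : IsOpen Ω) (hf₀ : ∀ z ∈ Ω, f₀ z.rep ≠ 0)
    (hconv : Convex ℝ (chartMap f₀ '' Ω)) (hbdd : Bornology.IsBounded (chartMap f₀ '' Ω))
    {xs ys : ℕ → PSp d} {x y : PSp d} (hxs : ∀ n, xs n ∈ Ω) (hys : ∀ n, ys n ∈ Ω)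
    (hx : Tendsto xs atTop (𝓝 x)) (hxcl : x ∈ closure Ω)
    (hy : Tendsto ys atTop (𝓝 y)) (hycl : y ∈ closure Ω) (hxy : x ≠ y) {M : ℝ}
    (hM : ∀ c : ℝ, (∀ᶠ n in atTop, c < hilbertDist Ω (xs n) (ys n)) → c ≤ M) :
    y ∈ face Ω x ∧ hilbertDist (face Ω x) x y ≤ M := by
  have hx0 := map_rep_ne_zero_of_mem_closure hf₀ hbdd hxcl
  have hy0 := map_rep_ne_zero_of_mem_closure hf₀ hbdd hycl
  have hp0 := chartMap_ne_zero f₀ hx0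
  have hq0 := chartMap_ne_zero f₀ hy0
  have hpD := (continuousAt_chartMap f₀ hx0).continuousWithinAt.mem_closure_image hxcl
  have hqD := (continuousAt_chartMap f₀ hy0).continuousWithinAt.mem_closure_image hycl
  have hpq : chartMap f₀ x ≠ chartMap f₀ y := fun h => hxy <| by
    rw [← mk_chartMap f₀ hp0, ← mk_chartMap f₀ hq0]
    exact mk_eq_mk_of_eq_smul hp0 hq0 (c := 1) (by rw [h, one_smul])
  obtain ⟨s₀, hs₀, hu, hs₀max⟩ := exists_max_extension isClosed_closure hbdd.closure hpD hpq
  obtain ⟨t₀, ht₀, hv, ht₀max⟩ := exists_max_extension isClosed_closure hbdd.closure hqD hpq.symm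
  have hK : ∀ s t, s₀ < s → t₀ < t → extCrossRatio s t ≤ Real.exp (2 * M) := fun s t hs ht => by
    have hs' : 0 < s := hs₀.trans_lt hs
    have ht' : 0 < t := ht₀.trans_lt ht
    have := hM _ (eventually_half_log_extCrossRatio_lt_hilbertDist hop hf₀ hconv hxs hys
      ((continuousAt_chartMap f₀ hx0).tendsto.comp hx)
      ((continuousAt_chartMap f₀ hy0).tendsto.comp hy) hs' ht' (hs₀max s hs) (ht₀max t ht))
    rw [← Real.log_le_iff_le_exp (by unfold extCrossRatio; positivity)]
    linarith
  obtain ⟨hs₀, ht₀, hle⟩ := extCrossRatio_le_of_forall_lt hs₀ ht₀ hK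
  obtain ⟨hyF, hbound⟩ := mem_face_and_crossSet_face_le (Ω := Ω) hconv.closure
    (fun _ => mk_mem_closure mk_mem_of_mem_chart) hp0 hq0 (map_chartMap f₀ hx0)
    (map_chartMap f₀ hy0) hs₀ ht₀ hu hv
  rw [mk_chartMap, mk_chartMap] at hyF hbound
  refine ⟨hyF, hilbertDist_le_of_forall_le ?_ fun r hr => (hbound r hr).trans hle⟩
  exact one_mem_crossSet f₀ (fun z hz => map_rep_ne_zero_of_mem_closure hf₀ hbdd
    (face_subset_closure hxcl hz)) hx0 hy0

end Domain

/-- **Proposition 5.2**: if `x_n → x` and `y_n → y` in `cl(Ω)` with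
`liminf H_Ω(x_n, y_n) < ∞`, then `y ∈ F_Ω(x)` and
`H_{F_Ω(x)}(x,y) ≤ liminf H_Ω(x_n,y_n)`. -/
theorem dist_est_and_faces {d : ℕ} (Ω : Set (PSp d)) (hΩ : IsProperlyConvexDomain Ω)
    (xs ys : ℕ → PSp d) (x y : PSp d)
    (hxs : ∀ n, xs n ∈ Ω) (hys : ∀ n, ys n ∈ Ω)
    (hx : Filter.Tendsto xs Filter.atTop (nhds x)) (hxcl : x ∈ closure Ω)
    (hy : Filter.Tendsto ys Filter.atTop (nhds y)) (hycl : y ∈ closure Ω)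
    (hfin : Filter.liminf (fun n => (hilbertDist Ω (xs n) (ys n) : EReal)) Filter.atTop < ⊤) :
    y ∈ face Ω x ∧
    (hilbertDist (face Ω x) x y : EReal) ≤
      Filter.liminf (fun n => (hilbertDist Ω (xs n) (ys n) : EReal)) Filter.atTop := by
  obtain ⟨hop, -, f₀, hf₀, hconv, hbdd⟩ := hΩ
  set L := liminf (fun n => (hilbertDist Ω (xs n) (ys n) : EReal)) atTop
  have hL0 : 0 ≤ L := le_liminf_of_le (by isBoundedDefault) <| Eventually.of_forall fun n =>
    EReal.coe_nonneg.2 <| hilbertDist_nonneg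
      (one_mem_crossSet f₀ hf₀ (hf₀ _ (hxs n)) (hf₀ _ (hys n)))
      (crossSet_bddAbove hop hf₀ hconv (hxs n) (hys n))
  rcases eq_or_ne x y with rfl | hxy
  · refine ⟨Set.mem_insert _ _, ?_⟩
    rwa [hilbertDist_self (C := face Ω x) (Set.mem_insert _ _), EReal.coe_zero]
  obtain ⟨M, hM⟩ : ∃ M : ℝ, L = M :=
    ⟨L.toReal, (EReal.coe_toReal hfin.ne (ne_bot_of_le_ne_bot EReal.zero_ne_bot hL0)).symm⟩
  obtain ⟨hyF, hle⟩ := mem_face_and_hilbertDist_face_le hop hf₀ hconv hbdd hxs hys hx hxcl hy hycl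
    hxy (M := M) fun c hc => EReal.coe_le_coe_iff.1 <| hM ▸
      le_liminf_of_le (by isBoundedDefault) (hc.mono fun n hn => EReal.coe_le_coe_iff.2 hn.le)
  exact ⟨hyF, hM ▸ EReal.coe_le_coe_iff.2 hle⟩

end CCProj
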